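/- For p ∈ [0,1], let ϱ_red be the 4×4 matrix (in the ordered basis |00⟩,|01⟩,|10⟩,|11⟩) with diagonal entries (2+p)/6, (1−p)/3, (1−p)/3, p/2, with entries (1−p)/3 in positions (|01⟩,|10⟩) and (|10⟩,|01⟩), and all other entries zero (this is the two-qubit marginal, obtained by tracing out any one qubit, of the three-qubit state p|GHZ⟩⟨GHZ| + (1−p)|W⟩⟨W| with |GHZ⟩ = (|000⟩+|111⟩)/√2 and |W⟩ = (|001⟩+|010⟩+|100⟩)/√3). Then the eigenvalues of ϱ_red are 0, (2/3)(1−p), p/2, and (2+p)/6, and ϱ_red ∈ 𝔄𝔉₂ if and only if p ∈ [1/4, 1]. -/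

import Mathlib

open Matrix Kronecker Complex
open scoped ComplexOrder

/-- The canonical maximally entangled vector `|ψ⁺⟩ = (1/√d) ∑ᵢ |ii⟩` on `ℂ^d ⊗ ℂ^d`. -/
noncomputable def psiPlus (d : ℕ) : (Fin d × Fin d) → ℂ :=
  fun p => if p.1 = p.2 then ((Real.sqrt d)⁻¹ : ℝ) else 0

/-- The fully entangled fraction: the supremum over `d × d` unitaries `V` of
`⟨ψ⁺| (I ⊗ V)† ρ (I ⊗ V) |ψ⁺⟩`. -/
noncomputable def fef (d : ℕ) (ρ : Matrix (Fin d × Fin d) (Fin d × Fin d) ℂ) : ℝ :=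
  ⨆ V : Matrix.unitaryGroup (Fin d) ℂ,
    (star (psiPlus d) ⬝ᵥ
      ((((1 : Matrix (Fin d) (Fin d) ℂ) ⊗ₖ (V : Matrix (Fin d) (Fin d) ℂ))ᴴ * ρ *
        ((1 : Matrix (Fin d) (Fin d) ℂ) ⊗ₖ (V : Matrix (Fin d) (Fin d) ℂ))) *ᵥ psiPlus d)).re

/-- A density matrix: positive semidefinite with unit trace. -/
def IsDensityMatrix {n : Type*} [Fintype n] (ρ : Matrix n n ℂ) : Prop :=
  ρ.PosSemidef ∧ ρ.trace = 1

/-- `ρ` has absolute fully entangled fraction: `F(UρU†) ≤ 1/d` for every unitary `U`. -/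
def AbsFEF (d : ℕ) (ρ : Matrix (Fin d × Fin d) (Fin d × Fin d) ℂ) : Prop :=
  ∀ U ∈ Matrix.unitaryGroup (Fin d × Fin d) ℂ, fef d (U * ρ * Uᴴ) ≤ 1 / d

/-- Basis vector `|ij⟩` of `ℂ^d ⊗ ℂ^d`. -/
def ket (d : ℕ) (i j : Fin d) : (Fin d × Fin d) → ℂ :=
  fun p => if p = (i, j) then 1 else 0

/-- Rank-one projector `|v⟩⟨v|`. -/
def proj {n : Type*} (v : n → ℂ) : Matrix n n ℂ :=
  Matrix.vecMulVec v (star v)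

/-- Matrix unit `|ab⟩⟨cd|` on `ℂ² ⊗ ℂ²`. -/
def E2 (a b c d : Fin 2) : Matrix (Fin 2 × Fin 2) (Fin 2 × Fin 2) ℂ :=
  Matrix.single (a, b) (c, d) 1

/-- The two-qubit marginal of `p|GHZ⟩⟨GHZ| + (1−p)|W⟩⟨W|`. -/
noncomputable def ghzWred (p : ℝ) : Matrix (Fin 2 × Fin 2) (Fin 2 × Fin 2) ℂ :=
  (((2 + p)/6 : ℝ) : ℂ) • E2 0 0 0 0 + (((1 - p)/3 : ℝ) : ℂ) • E2 0 1 0 1 +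
    (((1 - p)/3 : ℝ) : ℂ) • E2 1 0 1 0 + ((p/2 : ℝ) : ℂ) • E2 1 1 1 1 +
    (((1 - p)/3 : ℝ) : ℂ) • E2 0 1 1 0 + (((1 - p)/3 : ℝ) : ℂ) • E2 1 0 0 1

/-!
`ghzWred p` is the sum of `(2+p)/6 |00⟩⟨00|`, `p/2 |11⟩⟨11|` and the block
`(1-p)/3 [[1,1],[1,1]]` on `|01⟩, |10⟩`, whose eigenvalues are `(2/3)(1-p)` and `0`.

If `ρ ≤ c` in the Loewner order, then so is every unitary conjugate of `ρ`, and every term of the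
supremum defining the fully entangled fraction is a Rayleigh quotient at a unit vector, hence at
most `c`. For `p ∈ [1/4, 1]` all eigenvalues are at most `1/2`, so `ghzWred p` is in `𝔄𝔉₂`.
Conversely `1 ⊗ σₓ` carries `|φ₂⁺⟩` to the symmetric Bell vector `(|01⟩ + |10⟩)/√2`, an
eigenvector for `(2/3)(1-p)`, which exceeds `1/2` when `p < 1/4`.
-/

open Polynomial in
theorem Matrix.IsHermitian.map_eigenvalues_eq_of_charpoly_eq {𝕜 n : Type*} [RCLike 𝕜] [Fintype n]
    [DecidableEq n] {A : Matrix n n 𝕜} (hA : A.IsHermitian) {s : Multiset ℝ}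
    (h : A.charpoly = (s.map fun r : ℝ => X - C (r : 𝕜)).prod) :
    Finset.univ.val.map hA.eigenvalues = s := by
  apply Multiset.map_injective (RCLike.ofReal_injective (K := 𝕜))
  rw [Multiset.map_map, ← hA.roots_charpoly_eq_eigenvalues, h,
    ← roots_multiset_prod_X_sub_C (s.map RCLike.ofReal), Multiset.map_map]
  rfl

theorem Matrix.PosSemidef.smul_one_sub_conj {n : Type*} [Fintype n] [DecidableEq n]
    {ρ U : Matrix n n ℂ} {c : ℝ} (h : ((c : ℂ) • 1 - ρ).PosSemidef)
    (hU : U ∈ Matrix.unitaryGroup n ℂ) : ((c : ℂ) • 1 - U * ρ * Uᴴ).PosSemidef := by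
  have hUU : U * Uᴴ = 1 := by simpa [Matrix.star_eq_conjTranspose] using hU.2
  have hconj : (c : ℂ) • 1 - U * ρ * Uᴴ = U * ((c : ℂ) • 1 - ρ) * Uᴴ := by
    rw [Matrix.mul_sub, Matrix.sub_mul, Matrix.mul_smul, Matrix.mul_one, Matrix.smul_mul, hUU]
  rw [hconj]
  exact h.mul_mul_conjTranspose_same U

theorem re_star_dotProduct_mulVec_le {n : Type*} [Fintype n] [DecidableEq n]
    {M : Matrix n n ℂ} {c : ℝ} (h : ((c : ℂ) • 1 - M).PosSemidef)
    {w : n → ℂ} (hw : star w ⬝ᵥ w = 1) : (star w ⬝ᵥ (M *ᵥ w)).re ≤ c := by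
  have hquad := (Complex.le_def.mp (h.dotProduct_mulVec_nonneg w)).1
  simp only [Matrix.sub_mulVec, Matrix.smul_mulVec, Matrix.one_mulVec, dotProduct_sub,
    dotProduct_smul, hw, smul_eq_mul, mul_one, Complex.zero_re, Complex.sub_re,
    Complex.ofReal_re] at hquad
  linarith

section FullyEntangledFraction

variable {d : ℕ} {ρ : Matrix (Fin d × Fin d) (Fin d × Fin d) ℂ} {c : ℝ}

noncomputable def fefAt (d : ℕ) (ρ : Matrix (Fin d × Fin d) (Fin d × Fin d) ℂ)
    (V : Matrix.unitaryGroup (Fin d) ℂ) : ℝ :=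
  (star (psiPlus d) ⬝ᵥ
    ((((1 : Matrix (Fin d) (Fin d) ℂ) ⊗ₖ (V : Matrix (Fin d) (Fin d) ℂ))ᴴ * ρ *
      ((1 : Matrix (Fin d) (Fin d) ℂ) ⊗ₖ (V : Matrix (Fin d) (Fin d) ℂ))) *ᵥ psiPlus d)).re

theorem fefAt_one : fefAt d ρ 1 = (star (psiPlus d) ⬝ᵥ (ρ *ᵥ psiPlus d)).re := by
  simp [fefAt]

theorem star_psiPlus_dotProduct_psiPlus [NeZero d] : star (psiPlus d) ⬝ᵥ psiPlus d = 1 := by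
  simp only [dotProduct, Pi.star_apply, psiPlus, ofReal_inv, RCLike.star_def, mul_ite, mul_zero,
    Fintype.sum_prod_type, Finset.sum_ite_eq, Finset.mem_univ, ↓reduceIte, map_inv₀, conj_ofReal,
    Finset.sum_const, Finset.card_univ, Fintype.card_fin, nsmul_eq_mul]
  rw [← mul_inv, ← Complex.ofReal_mul, Real.mul_self_sqrt (Nat.cast_nonneg d)]
  exact mul_inv_cancel₀ (by exact_mod_cast NeZero.ne d)

theorem fefAt_le_of_posSemidef [NeZero d] (h : ((c : ℂ) • 1 - ρ).PosSemidef)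
    (V : Matrix.unitaryGroup (Fin d) ℂ) : fefAt d ρ V ≤ c := by
  have hV := Matrix.kronecker_mem_unitary (one_mem (unitary (Matrix (Fin d) (Fin d) ℂ))) V.2
  refine re_star_dotProduct_mulVec_le ?_ star_psiPlus_dotProduct_psiPlus
  simpa [Matrix.star_eq_conjTranspose] using h.smul_one_sub_conj (Unitary.star_mem hV)

theorem fef_le_of_posSemidef [NeZero d] (h : ((c : ℂ) • 1 - ρ).PosSemidef) : fef d ρ ≤ c :=
  ciSup_le (fefAt_le_of_posSemidef h)

theorem fefAt_le_fef [NeZero d] (h : ((c : ℂ) • 1 - ρ).PosSemidef)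
    (V : Matrix.unitaryGroup (Fin d) ℂ) : fefAt d ρ V ≤ fef d ρ :=
  le_ciSup ⟨c, Set.forall_mem_range.mpr (fefAt_le_of_posSemidef h)⟩ V

theorem absFEF_of_posSemidef [NeZero d] (h : (((1 / d : ℝ) : ℂ) • 1 - ρ).PosSemidef) :
    AbsFEF d ρ :=
  fun _ hU => fef_le_of_posSemidef (h.smul_one_sub_conj hU)

end FullyEntangledFraction

section GhzW

variable {p : ℝ}

open Polynomial in
theorem ghzWred_charpoly (p : ℝ) :
    (ghzWred p).charpoly =
      (({0, 2 / 3 * (1 - p), p / 2, (2 + p) / 6} : Multiset ℝ).map fun r => X - C (r : ℂ)).prod := by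
  let e : Fin 2 × Fin 2 ≃ Fin 4 := finProdFinEquiv
  have he : Matrix.reindex e e (ghzWred p) =
      !![(((2 + p) / 6 : ℝ) : ℂ), 0, 0, 0;
         0, (((1 - p) / 3 : ℝ) : ℂ), (((1 - p) / 3 : ℝ) : ℂ), 0;
         0, (((1 - p) / 3 : ℝ) : ℂ), (((1 - p) / 3 : ℝ) : ℂ), 0;
         0, 0, 0, ((p / 2 : ℝ) : ℂ)] := by
    ext i j
    fin_cases i <;> fin_cases j <;> simp +decide [e, ghzWred, E2, Matrix.single_apply, finProdFinEquiv]
  rw [← Matrix.charpoly_reindex e, he, Matrix.charpoly, Matrix.det_succ_row_zero]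
  apply Polynomial.funext
  intro x
  simp [Fin.sum_univ_succ, Matrix.det_fin_three, Fin.succAbove, charmatrix_apply]
  ring

theorem smul_one_sub_ghzWred_eq (p c : ℝ) :
    (c : ℂ) • 1 - ghzWred p =
      (c - (2 + p) / 6) • proj (ket 2 0 0) +
        (c - 2 / 3 * (1 - p)) • (proj (ket 2 0 1) + proj (ket 2 1 0)) +
        (c - p / 2) • proj (ket 2 1 1) + ((1 - p) / 3) • proj (ket 2 0 1 - ket 2 1 0) := by
  ext ⟨a, b⟩ ⟨a', b'⟩
  fin_cases a <;> fin_cases b <;> fin_cases a' <;> fin_cases b' <;>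
    simp [ghzWred, E2, proj, ket, Matrix.vecMulVec_apply] <;> ring

theorem smul_one_sub_ghzWred_posSemidef {c : ℝ} (hp : p ≤ 1) (h₀₀ : (2 + p) / 6 ≤ c)
    (h₁₁ : p / 2 ≤ c) (hsym : 2 / 3 * (1 - p) ≤ c) :
    ((c : ℂ) • 1 - ghzWred p).PosSemidef := by
  have hproj (v : Fin 2 × Fin 2 → ℂ) : (proj v).PosSemidef :=
    Matrix.posSemidef_vecMulVec_self_star v
  rw [smul_one_sub_ghzWred_eq]
  exact ((((hproj _).smul (sub_nonneg.mpr h₀₀)).add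
    (((hproj _).add (hproj _)).smul (sub_nonneg.mpr hsym))).add
    ((hproj _).smul (sub_nonneg.mpr h₁₁))).add
    ((hproj _).smul (div_nonneg (sub_nonneg.mpr hp) zero_le_three))

theorem absFEF_ghzWred (hp : 1 / 4 ≤ p) (hp₁ : p ≤ 1) : AbsFEF 2 (ghzWred p) :=
  absFEF_of_posSemidef <| smul_one_sub_ghzWred_posSemidef hp₁
    (by norm_num; linarith) (by norm_num; linarith) (by norm_num; linarith)

theorem swap_mem_unitaryGroup :
    (!![0, 1; 1, 0] : Matrix (Fin 2) (Fin 2) ℂ) ∈ Matrix.unitaryGroup (Fin 2) ℂ := by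
  rw [Matrix.mem_unitaryGroup_iff']
  ext i j
  fin_cases i <;> fin_cases j <;> simp [Matrix.mul_apply]

theorem fefAt_one_kronecker_swap_conj_ghzWred (p : ℝ) :
    fefAt 2 (((1 : Matrix (Fin 2) (Fin 2) ℂ) ⊗ₖ !![0, 1; 1, 0]) * ghzWred p *
      ((1 : Matrix (Fin 2) (Fin 2) ℂ) ⊗ₖ !![0, 1; 1, 0])ᴴ) 1 = 2 / 3 * (1 - p) := by
  rw [fefAt_one]
  simp [dotProduct, Matrix.mulVec, Matrix.mul_apply, Fintype.sum_prod_type, psiPlus, ghzWred, E2,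
    Matrix.single_apply, Matrix.conjTranspose_apply]
  linear_combination (1 - p) / 3 * Real.mul_self_sqrt (zero_le_two (α := ℝ))

theorem not_absFEF_ghzWred (hp : p < 1 / 4) : ¬AbsFEF 2 (ghzWred p) := by
  intro h
  let U := (1 : Matrix (Fin 2) (Fin 2) ℂ) ⊗ₖ !![0, 1; 1, 0]
  have hU : U ∈ Matrix.unitaryGroup (Fin 2 × Fin 2) ℂ :=
    Matrix.kronecker_mem_unitary (one_mem _) swap_mem_unitaryGroup
  -- `fef` is a `ciSup` over reals, so bounding it from below needs some upper bound on `ρ`.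
  have hbound : (((1 - p : ℝ) : ℂ) • 1 - U * ghzWred p * Uᴴ).PosSemidef :=
    (smul_one_sub_ghzWred_posSemidef (by linarith) (by linarith) (by linarith)
      (by linarith)).smul_one_sub_conj hU
  have hfef := (fefAt_le_fef hbound 1).trans (h U hU)
  rw [fefAt_one_kronecker_swap_conj_ghzWred] at hfef
  norm_num at hfef
  linarith

end GhzW

theorem ghzWred_absFEF_iff_general (p : ℝ) (hp1 : p ≤ 1)
    (hH : (ghzWred p).IsHermitian) :
    (Finset.univ.val.map hH.eigenvalues : Multiset ℝ) =
      {0, (2/3)*(1 - p), p/2, (2 + p)/6} ∧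
    (AbsFEF 2 (ghzWred p) ↔ (1/4 ≤ p ∧ p ≤ 1)) := by
  refine ⟨hH.map_eigenvalues_eq_of_charpoly_eq (ghzWred_charpoly p), ?_, ?_⟩
  · exact fun h => ⟨le_of_not_gt fun hp => not_absFEF_ghzWred hp h, hp1⟩
  · exact fun h => absFEF_ghzWred h.1 h.2

/-- The marginal of `p|GHZ⟩⟨GHZ| + (1−p)|W⟩⟨W|` has eigenvalues
`0, (2/3)(1−p), p/2, (2+p)/6`, and lies in `𝔄𝔉₂` iff `p ∈ [1/4, 1]`. -/
theorem ghzWred_absFEF_iff (p : ℝ) (hp0 : 0 ≤ p) (hp1 : p ≤ 1)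
    (hH : (ghzWred p).IsHermitian) :
    (Finset.univ.val.map hH.eigenvalues : Multiset ℝ) =
      {0, (2/3)*(1 - p), p/2, (2 + p)/6} ∧
    (AbsFEF 2 (ghzWred p) ↔ (1/4 ≤ p ∧ p ≤ 1)) :=
  ghzWred_absFEF_iff_general p hp1 hH
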